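/- arXiv:1812.04360 — 4 statements merged into one kernel-verified Lean document; each statement's English description precedes it below -/
import Mathlib

section
/- The inclusion E_n ⊆ ℰ_n of subgroups of K_nˣ induces a group isomorphism E_n/C_n ≅ ℰ_n/𝒞_n; precisely, the homomorphism from the quotient group E_n/C_n to ℰ_n/𝒞_n induced by the inclusion is bijective. (Lemma 6.2, first isomorphism) -/
/-- The group `ℰ` of `p`-units of a number field `K`, i.e. the unit group of
`𝒪_K[1/p]`, viewed as a subgroup of `Kˣ`.  Here `𝒪_K[1/p]` is realized as the
subring of `K` generated by the integral closure of `ℤ` together with `p⁻¹`. -/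
noncomputable def pUnits (K : Type*) [Field K] (p : ℕ) : Subgroup Kˣ :=
  (Algebra.adjoin ℤ (insert ((p : K)⁻¹) (integralClosure ℤ K : Set K))).toSubmonoid.units

/-- The group `E` of units of the ring of integers of `K`, viewed as a subgroup
of `Kˣ`. -/
noncomputable def intUnits (K : Type*) [Field K] : Subgroup Kˣ :=
  (integralClosure ℤ K).toSubmonoid.units

/-- The group `𝒞` of cyclotomic `p`-units: the subgroup of `Kˣ` generated by the
`p^n`-th roots of unity together with the elements `1 - ζ^k` for `0 < k < p^n`. -/
noncomputable def cycPUnits (K : Type*) [Field K] (p n : ℕ) (ζ : K) : Subgroup Kˣ :=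
  Subgroup.closure
    {x : Kˣ | (x : K) ^ p ^ n = 1 ∨ ∃ k : ℕ, 0 < k ∧ k < p ^ n ∧ (x : K) = 1 - ζ ^ k}

/-!
Write `π = 1 - ζ`, a prime of `𝒪` with `p ∣ π ^ [K : ℚ]`. A `p`-unit `x` has `x p ^ m ∈ 𝒪` and
`x⁻¹ p ^ l ∈ 𝒪` for some `m, l`, hence `x π ^ M ∈ 𝒪` and `x⁻¹ π ^ N ∈ 𝒪`; the product of these
two integers is `π ^ (M + N)`, so by unique factorisation of powers of a prime each is a unit
times a power of `π`. Thus `ℰ = E · π ^ ℤ ⊆ E · 𝒞`, which is surjectivity of `E/C → ℰ/𝒞`;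
injectivity holds for any inclusion of subgroups since `C = 𝒞 ∩ E`.
-/

section QuotientMap

variable {G : Type*} [CommGroup G] {A B C : Subgroup G} (hAB : A ≤ B)
  (hC : (C ⊓ A).subgroupOf A ≤ (C.subgroupOf B).comap (Subgroup.inclusion hAB))

theorem QuotientGroup.map_subgroupOf_inclusion_injective :
    Function.Injective (map _ _ (Subgroup.inclusion hAB) hC) := by
  refine fun a b ↦ QuotientGroup.induction_on a fun a ↦ QuotientGroup.induction_on b fun b h ↦ ?_
  rw [map_mk, map_mk, QuotientGroup.eq, Subgroup.mem_subgroupOf] at h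
  rw [QuotientGroup.eq, Subgroup.mem_subgroupOf]
  exact ⟨h, SetLike.coe_mem _⟩

theorem QuotientGroup.map_subgroupOf_inclusion_surjective
    (h : ∀ x ∈ B, ∃ e ∈ A, e⁻¹ * x ∈ C) :
    Function.Surjective (map _ _ (Subgroup.inclusion hAB) hC) := by
  refine fun y ↦ QuotientGroup.induction_on y fun x ↦ ?_
  obtain ⟨e, he, hex⟩ := h x x.2
  refine ⟨(⟨e, he⟩ : A), ?_⟩
  rw [map_mk, QuotientGroup.eq, Subgroup.mem_subgroupOf]
  exact hex

end QuotientMap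

namespace Subalgebra

variable {R K : Type*} [CommSemiring R] [Field K] [Algebra R K] (A : Subalgebra R K)

theorem exists_mul_pow_mem_of_mem_adjoin_inv {q : A} {x : K}
    (hx : x ∈ Algebra.adjoin R (insert (q : K)⁻¹ (A : Set K))) : ∃ m : ℕ, x * q ^ m ∈ A := by
  induction hx using Algebra.adjoin_induction with
  | mem y hy =>
    rcases hy with rfl | hy
    · refine ⟨1, ?_⟩
      rcases eq_or_ne (q : K) 0 with hq | hq <;> simp [hq]
    · exact ⟨0, by simpa using hy⟩
  | algebraMap r => exact ⟨0, by simp [A.algebraMap_mem r]⟩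
  | add x y _ _ hx hy =>
    obtain ⟨m, hm⟩ := hx
    obtain ⟨l, hl⟩ := hy
    refine ⟨m + l, ?_⟩
    have := A.add_mem (A.mul_mem hm (A.pow_mem q.2 l)) (A.mul_mem hl (A.pow_mem q.2 m))
    convert this using 1
    ring
  | mul x y _ _ hx hy =>
    obtain ⟨m, hm⟩ := hx
    obtain ⟨l, hl⟩ := hy
    refine ⟨m + l, ?_⟩
    rw [pow_add, mul_mul_mul_comm]
    exact A.mul_mem hm hl

theorem exists_mem_units_eq_mul_zpow_of_mul_pow_mem {π : A} (hπ : Prime π) {x : Kˣ} {M N : ℕ}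
    (hM : (x : K) * π ^ M ∈ A) (hN : ((x⁻¹ : Kˣ) : K) * π ^ N ∈ A) :
    ∃ e ∈ A.toSubmonoid.units, ∃ k : ℤ, (x : K) = e * (π : K) ^ k := by
  have hab : (⟨_, hM⟩ : A) * ⟨_, hN⟩ = π ^ (M + N) := by
    ext
    simp only [MulMemClass.coe_mul, SubmonoidClass.coe_pow, Units.val_inv_eq_inv_val, pow_add]
    field_simp
  obtain ⟨i, -, hi⟩ := (dvd_prime_pow hπ _).1 (Dvd.intro _ hab)
  obtain ⟨u, hu⟩ := hi.symm
  have hπ0 : (π : K) ≠ 0 := by exact_mod_cast hπ.ne_zero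
  refine ⟨Units.map (A.val : A →* K) u, ⟨u.1.2, ?_⟩, (i : ℤ) - M, ?_⟩
  · show ((Units.map (A.val : A →* K) u)⁻¹ : Kˣ).1 ∈ A
    rw [← map_inv]
    exact u⁻¹.1.2
  have hu' := congrArg (fun a : A ↦ (a : K)) hu
  simp only [MulMemClass.coe_mul, SubmonoidClass.coe_pow] at hu'
  rw [zpow_sub₀ hπ0, zpow_natCast, zpow_natCast, Units.coe_map, mul_div_assoc', eq_div_iff (pow_ne_zero _ hπ0), ← hu', mul_comm]
  rfl

theorem exists_mem_units_eq_mul_zpow_of_mem_units_adjoin_inv {q π : A} (hπ : Prime π) {T : ℕ}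
    (hqπ : q ∣ π ^ T) {x : Kˣ}
    (hx : x ∈ (Algebra.adjoin R (insert (q : K)⁻¹ (A : Set K))).toSubmonoid.units) :
    ∃ e ∈ A.toSubmonoid.units, ∃ k : ℤ, (x : K) = e * (π : K) ^ k := by
  obtain ⟨c, hc⟩ := hqπ
  have clear_denominators (y : K) (hy : y ∈ Algebra.adjoin R (insert (q : K)⁻¹ (A : Set K))) :
      ∃ M : ℕ, y * π ^ M ∈ A := by
    obtain ⟨m, hm⟩ := A.exists_mul_pow_mem_of_mem_adjoin_inv hy
    refine ⟨T * m, ?_⟩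
    rw [pow_mul, ← SubmonoidClass.coe_pow, hc, MulMemClass.coe_mul, mul_pow, ← mul_assoc]
    exact A.mul_mem hm (A.pow_mem c.2 m)
  obtain ⟨M, hM⟩ := clear_denominators _ hx.1
  obtain ⟨N, hN⟩ := clear_denominators _ hx.2
  exact A.exists_mem_units_eq_mul_zpow_of_mul_pow_mem hπ hM hN

end Subalgebra

namespace IsPrimitiveRoot

open NumberField IsCyclotomicExtension.Rat

variable {p k : ℕ} [Fact p.Prime] {K : Type*} [Field K] [CharZero K]
  [IsCyclotomicExtension {p ^ (k + 1)} ℚ K] {ζ : K}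

theorem natCast_dvd_toInteger_sub_one_pow (hζ : IsPrimitiveRoot ζ (p ^ (k + 1))) :
    (p : 𝓞 K) ∣ (hζ.toInteger - 1) ^ Module.finrank ℚ K := by
  have : NumberField K := IsCyclotomicExtension.numberField {p ^ (k + 1)} ℚ K
  have h := map_eq_span_zeta_sub_one_pow p k hζ
  rw [Ideal.map_span, Set.image_singleton, Ideal.span_singleton_pow,
    Ideal.span_singleton_eq_span_singleton] at h
  simpa using h.dvd

theorem exists_mem_intUnits_inv_mul_mem_cycPUnits (hζ : IsPrimitiveRoot ζ (p ^ (k + 1)))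
    {x : Kˣ} (hx : x ∈ pUnits K p) :
    ∃ e ∈ intUnits K, e⁻¹ * x ∈ cycPUnits K p (k + 1) ζ := by
  have hπ : Prime (1 - hζ.toInteger) := by
    rw [← neg_sub]
    exact (zeta_sub_one_prime hζ).neg
  have hdvd : (p : 𝓞 K) ∣ (1 - hζ.toInteger) ^ Module.finrank ℚ K := by
    rw [← neg_sub, neg_pow]
    exact dvd_mul_of_dvd_right hζ.natCast_dvd_toInteger_sub_one_pow _
  obtain ⟨e, he, j, hxe⟩ :=
    (integralClosure ℤ K).exists_mem_units_eq_mul_zpow_of_mem_units_adjoin_inv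
      (q := (p : integralClosure ℤ K)) hπ hdvd (x := x) (by simpa [pUnits] using hx)
  have hp1 : 1 < p ^ (k + 1) := Nat.one_lt_pow k.succ_ne_zero (Fact.out : p.Prime).one_lt
  have hζ1 : 1 - ζ ≠ 0 := sub_ne_zero.2 (hζ.ne_one hp1).symm
  have hπC : Units.mk0 (1 - ζ) hζ1 ∈ cycPUnits K p (k + 1) ζ :=
    Subgroup.subset_closure (Or.inr ⟨1, one_pos, hp1, by simp⟩)
  refine ⟨e, he, ?_⟩
  have hx' : e⁻¹ * x = Units.mk0 (1 - ζ) hζ1 ^ j := by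
    ext
    rw [Units.val_mul, Units.val_inv_eq_inv_val, hxe, inv_mul_cancel_left₀ e.ne_zero,
      Units.val_zpow_eq_zpow_val, Units.val_mk0]
    rfl
  rw [hx']
  exact zpow_mem hπC j

end IsPrimitiveRoot

/-- **Lemma 6.2, first isomorphism.**  Let `p` be an odd prime, `n ≥ 1`,
`K = ℚ(ζ_{p^n})` and `ζ` a primitive `p^n`-th root of unity.  Let `E` be the
unit group of the ring of integers, `ℰ` the group of `p`-units, `𝒞` the group
of cyclotomic `p`-units and `C = 𝒞 ⊓ E` the group of cyclotomic units.  The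
homomorphism `E/C → ℰ/𝒞` induced by the inclusion `E ≤ ℰ` is bijective. -/
theorem intUnits_div_cycUnits_equiv_pUnits_div_cycPUnits
    (p : ℕ+) (hp : (p : ℕ).Prime) (n : ℕ) (hn : 1 ≤ n)
    (ζ : CyclotomicField (p ^ n) ℚ) (hζ : IsPrimitiveRoot ζ ((p : ℕ) ^ n))
    (hle : intUnits (CyclotomicField (p ^ n) ℚ) ≤ pUnits (CyclotomicField (p ^ n) ℚ) p) :
    Function.Bijective
      (QuotientGroup.map
        ((cycPUnits (CyclotomicField (p ^ n) ℚ) p n ζ ⊓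
            intUnits (CyclotomicField (p ^ n) ℚ)).subgroupOf
          (intUnits (CyclotomicField (p ^ n) ℚ)))
        ((cycPUnits (CyclotomicField (p ^ n) ℚ) p n ζ).subgroupOf
          (pUnits (CyclotomicField (p ^ n) ℚ) p))
        (Subgroup.inclusion hle)
        (by
          intro x hx
          simp only [Subgroup.mem_comap, Subgroup.mem_subgroupOf, Subgroup.mem_inf,
            Subgroup.coe_inclusion] at *
          exact hx.1)) := by
  obtain ⟨k, rfl⟩ : ∃ k, n = k + 1 := ⟨n - 1, by omega⟩
  have : Fact (p : ℕ).Prime := ⟨hp⟩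
  have : NeZero (((p : ℕ) ^ (k + 1) : ℕ) : ℚ) := ⟨by positivity⟩
  have : IsCyclotomicExtension {(p : ℕ) ^ (k + 1)} ℚ (CyclotomicField (p ^ (k + 1)) ℚ) :=
    CyclotomicField.isCyclotomicExtension _ ℚ
  exact ⟨QuotientGroup.map_subgroupOf_inclusion_injective hle _,
    QuotientGroup.map_subgroupOf_inclusion_surjective hle _
      fun x hx ↦ hζ.exists_mem_intUnits_inv_mul_mem_cycPUnits hx⟩
end

section
/- A ℤ_p-valued measure on ℤ_pˣ is determined by its moments: if μ : C(ℤ_pˣ, ℤ_p) →L[ℤ_p] ℤ_p is a continuous ℤ_p-linear functional such that μ applied to the continuous function u ↦ (u : ℤ_p)^k is zero for every integer k ≥ 0, then μ = 0. (Injectivity of the map Φ : ℤ_p[[ℤ_pˣ]] → ∏_{k≥1} ℤ_p(k), Φ(μ) = (∫_{ℤ_pˣ} x^{k−1} dμ(x))_k, from the Lemma of Section 4) -/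
/-!
By Mahler's theorem the binomial functions `x ↦ (x choose n)` span a dense submodule of
`C(ℤ_p, ℤ_p)`. Since `n! (x choose n)` is an integer polynomial in `x` and `ℤ_p` is torsion-free,
a continuous functional on `C(ℤ_p, ℤ_p)` killing all monomials kills every binomial function,
hence vanishes. As `ℤ_pˣ` is clopen in `ℤ_p`, every continuous function on `ℤ_pˣ` extends by
zero to `ℤ_p`, so the statement for `ℤ_pˣ` follows by restricting functions from `ℤ_p`.
-/

open Polynomial Topology Filter
open scoped Nat

theorem Topology.IsOpenEmbedding.exists_comp_eq_of_isClosed_range {X Y M : Type*}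
    [TopologicalSpace X] [TopologicalSpace Y] [TopologicalSpace M] [Zero M] {e : X → Y}
    (he : IsOpenEmbedding e) (hc : IsClosed (Set.range e)) (f : C(X, M)) :
    ∃ g : C(Y, M), ⇑g ∘ e = f := by
  have hcomp : Function.extend e f 0 ∘ e = f := funext (he.injective.extend_apply f 0)
  refine ⟨⟨Function.extend e f 0, continuous_iff_continuousAt.2 fun y ↦ ?_⟩, hcomp⟩
  by_cases hy : y ∈ Set.range e
  · obtain ⟨x, rfl⟩ := hy
    rw [← he.continuousAt_iff, hcomp]
    exact f.continuous.continuousAt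
  · have h0 : (fun _ ↦ 0) =ᶠ[𝓝 y] Function.extend e f 0 :=
      eventually_of_mem (hc.isOpen_compl.mem_nhds hy) fun z hz ↦
        (Function.extend_apply' (f := e) f 0 z (by simpa using hz)).symm
    exact continuousAt_const.congr h0

namespace PadicInt

variable {p : ℕ} [Fact p.Prime]

theorem dense_span_range_mahler :
    Dense (Submodule.span ℤ_[p] (Set.range (mahler (p := p))) : Set C(ℤ_[p], ℤ_[p])) := by
  refine fun f ↦ mem_closure_of_tendsto (hasSum_mahler f).tendsto_sum_nat (.of_forall fun N ↦ ?_)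
  refine Submodule.sum_mem _ fun n _ ↦ ?_
  have (a : ℤ_[p]) : mahlerTerm a n = a • mahler n := by
    ext x
    simp [mahlerTerm_apply, mul_comm]
  rw [this]
  exact Submodule.smul_mem _ _ (Submodule.subset_span ⟨n, rfl⟩)

theorem factorial_smul_mahler (n : ℕ) :
    n ! • (mahler n : C(ℤ_[p], ℤ_[p])) = aeval (ContinuousMap.id ℤ_[p]) (descPochhammer ℤ n) := by
  ext x
  have hx : aeval (ContinuousMap.id ℤ_[p]) (descPochhammer ℤ n) x = aeval x (descPochhammer ℤ n) :=
    (aeval_algHom_apply (ContinuousMap.evalAlgHom ℤ ℤ_[p] x) _ _).symm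
  rw [ContinuousMap.nsmul_apply, hx, aeval_eq_smeval, Ring.descPochhammer_eq_factorial_smul_choose,
    mahler_apply]

theorem continuousLinearMap_eq_zero_of_map_pow_eq_zero {M : Type*} [AddCommGroup M]
    [Module ℤ_[p] M] [TopologicalSpace M] [T2Space M] [IsAddTorsionFree M]
    (L : C(ℤ_[p], ℤ_[p]) →L[ℤ_[p]] M) (h : ∀ k : ℕ, L (ContinuousMap.id ℤ_[p] ^ k) = 0) :
    L = 0 := by
  have h_poly (P : ℤ[X]) : L (aeval (ContinuousMap.id ℤ_[p]) P) = 0 := by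
    rw [aeval_eq_sum_range, map_sum]
    exact Finset.sum_eq_zero fun i _ ↦ by rw [map_zsmul, h, smul_zero]
  have h_mahler (n : ℕ) : L (mahler n) = 0 :=
    nsmul_right_injective n.factorial_ne_zero <| by
      simp only [← map_nsmul, factorial_smul_mahler, h_poly, smul_zero]
  exact ContinuousLinearMap.ext_on dense_span_range_mahler (by rintro _ ⟨n, rfl⟩; simp [h_mahler])

end PadicInt

/-- A `ℤ_p`-valued measure on `ℤ_pˣ` (i.e. a continuous `ℤ_p`-linear functional on
`C(ℤ_pˣ, ℤ_p)`) is determined by its moments: if `∫ x^k dμ = 0` for all `k ≥ 0`,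
then `μ = 0`. -/
theorem measure_eq_zero_of_moments_eq_zero (p : ℕ) [Fact p.Prime]
    (μ : C(ℤ_[p]ˣ, ℤ_[p]) →L[ℤ_[p]] ℤ_[p])
    (h : ∀ k : ℕ, μ ⟨fun u : ℤ_[p]ˣ => ((u : ℤ_[p]) ^ k), Units.continuous_val.pow k⟩ = 0) :
    μ = 0 := by
  let ι : C(ℤ_[p]ˣ, ℤ_[p]) := ⟨Units.val, Units.continuous_val⟩
  have hμ : μ.comp (ContinuousMap.compCLM ℤ_[p] ℤ_[p] ι) = 0 :=
    PadicInt.continuousLinearMap_eq_zero_of_map_pow_eq_zero _ fun k ↦ h k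
  ext f
  obtain ⟨g, hg⟩ := Units.isOpenEmbedding_val.exists_comp_eq_of_isClosed_range
    (isCompact_range Units.continuous_val).isClosed f
  have hf : f = g.comp ι := ContinuousMap.ext (congrFun hg.symm)
  rw [hf]
  exact congr($hμ g)
end

section
/- Let φ : ℤ_p⟦X⟧ → ℤ_p⟦X⟧ be given by φ(f)(X) = f((1+X)^p − 1) and let D be the derivation D(f) = (1+X)·f′. Then for every f ∈ ℤ_p⟦X⟧ and every integer k ≥ 0, the constant coefficient of D^k(f − φ(f)) equals (1 − p^k) times the constant coefficient of D^k(f). (Power-series form of Lemma 4.3(ii)/Corollary 4.5: under the dictionary ∫_{ℤ_p} x^k dμ_f = constant coefficient of D^k f, the k-th moment of the measure attached to f − f((1+X)^p − 1) is (1 − p^k) ∫_{ℤ_p} x^k dμ_f) -/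
/-- Substitution of `(1+X)^p - 1` into a formal power series over `ℤ_p`:
`φ(f)(X) = f((1+X)^p - 1)`.  Since `(1+X)^p - 1` has zero constant coefficient,
the `k`-th coefficient of the substitution is the finite sum
`∑_{n ≤ k} (coeff n f) * coeff k (((1+X)^p - 1)^n)`. -/
noncomputable def phi (p : ℕ) [Fact p.Prime] (f : PowerSeries ℤ_[p]) : PowerSeries ℤ_[p] :=
  PowerSeries.mk fun k =>
    ∑ n ∈ Finset.range (k + 1),
      PowerSeries.coeff (R := ℤ_[p]) n f *
        PowerSeries.coeff (R := ℤ_[p]) k (((1 + PowerSeries.X) ^ p - 1) ^ n)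

/-- The derivation `D(f) = (1+X)·f′`. -/
noncomputable def Dop (p : ℕ) [Fact p.Prime] (f : PowerSeries ℤ_[p]) : PowerSeries ℤ_[p] :=
  (1 + PowerSeries.X) * PowerSeries.derivative ℤ_[p] f

/-! The map `φ` is substitution of `g = (1+X)^p - 1`, which has no constant term, so `φ`
preserves constant coefficients. By the chain rule, `D(φ f) = φ(f′) · (1+X) g′`, and
`(1+X) g′ = p (1+X)^p = p · φ(1+X)`; hence `D ∘ φ = p · φ ∘ D` and
`D^k(φ f) = p^k · φ(D^k f)`, whose constant coefficient is `p^k` times that of `D^k f`. -/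

open PowerSeries

section

variable {R : Type*} [CommRing R]

theorem coeff_pow_eq_zero_of_lt {g : R⟦X⟧} (hg : constantCoeff g = 0)
    {m n : ℕ} (hmn : m < n) : coeff m (g ^ n) = 0 :=
  coeff_of_lt_order m <|
    (Nat.cast_lt.mpr hmn).trans_le (le_order_pow_of_constantCoeff_eq_zero n hg)

theorem coeff_subst_eq_sum_range {g : R⟦X⟧} (hg : constantCoeff g = 0) (f : R⟦X⟧) (k : ℕ) :
    coeff k (f.subst g) = ∑ n ∈ Finset.range (k + 1), coeff n f * coeff k (g ^ n) := by
  rw [coeff_subst' (.of_constantCoeff_zero' hg), finsum_eq_sum_of_support_subset]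
  · rfl
  · intro n hn
    by_contra hnk
    simp only [Finset.coe_range, Set.mem_Iio, not_lt] at hnk
    exact hn (by simp [coeff_pow_eq_zero_of_lt hg (by omega : k < n)])

theorem constantCoeff_subst_of_constantCoeff_eq_zero {g : R⟦X⟧} (hg : constantCoeff g = 0)
    (f : R⟦X⟧) : constantCoeff (f.subst g) = constantCoeff f := by
  simpa using coeff_subst_eq_sum_range hg f 0

theorem one_add_X_mul_derivative_one_add_X_pow (q : ℕ) :
    (1 + X) * d⁄dX R ((1 + X) ^ q) = (q : R) • (1 + X) ^ q := by
  induction q with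
  | zero => simp
  | succ q ih =>
    rw [pow_succ, Derivation.leibniz, map_add, Derivation.map_one_eq_zero, derivative_X,
      smul_eq_mul, smul_eq_mul, smul_eq_C_mul, map_natCast] at *
    push_cast
    linear_combination (1 + X) * ih

theorem one_add_X_mul_derivative_subst_one_add_X_pow_sub_one (q : ℕ) (f : R⟦X⟧) :
    (1 + X) * d⁄dX R (f.subst ((1 + X) ^ q - 1 : R⟦X⟧)) =
      (q : R) • ((1 + X) * d⁄dX R f).subst ((1 + X) ^ q - 1 : R⟦X⟧) := by
  set g : R⟦X⟧ := (1 + X) ^ q - 1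
  have hg : HasSubst g := .of_constantCoeff_zero' (by simp [g])
  have subst_one_add_X : (1 + X : R⟦X⟧).subst g = (1 + X) ^ q := by
    rw [← coe_substAlgHom hg, map_add, map_one, substAlgHom_X]
    ring
  have one_add_X_mul_derivative : (1 + X) * d⁄dX R g = (q : R) • (1 + X) ^ q := by
    rw [map_sub, Derivation.map_one_eq_zero, sub_zero, one_add_X_mul_derivative_one_add_X_pow]
  rw [derivative_subst hg, subst_mul hg, subst_one_add_X, ← smul_mul_assoc,
    ← one_add_X_mul_derivative]
  ring

end

section

variable (p : ℕ) [Fact p.Prime]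

theorem phi_eq_subst (f : ℤ_[p]⟦X⟧) :
    phi p f = f.subst ((1 + X) ^ p - 1 : ℤ_[p]⟦X⟧) := by
  ext k
  rw [coeff_subst_eq_sum_range (by simp)]
  simp [phi]

theorem Dop_phi (f : ℤ_[p]⟦X⟧) : Dop p (phi p f) = (p : ℤ_[p]) • phi p (Dop p f) := by
  simp only [Dop, phi_eq_subst]
  exact one_add_X_mul_derivative_subst_one_add_X_pow_sub_one p f

theorem constantCoeff_phi (f : ℤ_[p]⟦X⟧) : constantCoeff (phi p f) = constantCoeff f := by
  rw [phi_eq_subst, constantCoeff_subst_of_constantCoeff_eq_zero (by simp)]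

noncomputable def dopLinearMap : Module.End ℤ_[p] ℤ_[p]⟦X⟧ :=
  LinearMap.mulLeft ℤ_[p] (1 + X) ∘ₗ (d⁄dX ℤ_[p]).toLinearMap

theorem coe_dopLinearMap : ⇑(dopLinearMap p) = Dop p := rfl

theorem Dop_iterate_phi (k : ℕ) (f : ℤ_[p]⟦X⟧) :
    (Dop p)^[k] (phi p f) = (p : ℤ_[p]) ^ k • phi p ((Dop p)^[k] f) := by
  induction k with
  | zero => simp
  | succ k ih =>
    rw [Function.iterate_succ_apply', ih, ← coe_dopLinearMap, map_smul, coe_dopLinearMap, Dop_phi,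
      smul_smul, ← pow_succ, Function.iterate_succ_apply']

end

/-- For every `f ∈ ℤ_p⟦X⟧` and every `k ≥ 0`, the constant coefficient of
`D^k(f - φ(f))` equals `(1 - p^k)` times the constant coefficient of `D^k(f)`. -/
theorem constantCoeff_Dop_iterate_sub_phi (p : ℕ) [Fact p.Prime]
    (f : PowerSeries ℤ_[p]) (k : ℕ) :
    PowerSeries.constantCoeff (R := ℤ_[p]) ((Dop p)^[k] (f - phi p f)) =
      (1 - (p : ℤ_[p]) ^ k) * PowerSeries.constantCoeff (R := ℤ_[p]) ((Dop p)^[k] f) := by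
  rw [← coe_dopLinearMap, iterate_map_sub, coe_dopLinearMap, Dop_iterate_phi, map_sub,
    smul_eq_C_mul, map_mul, constantCoeff_C, constantCoeff_phi]
  ring
end

section
/- Let f ∈ ℤ_p⟦X⟧ be a formal power series such that for every integer n ≥ 1 the power series Φ_{p^n}(1+X) divides f in ℤ_p⟦X⟧, where Φ_{p^n} is the p^n-th cyclotomic polynomial over ℤ_p. Then f = 0. (Algebraic form of the uniqueness assertion in Coleman's theorem (Theorem 4.1): a power series over ℤ_p vanishing at ζ − 1 for primitive p^n-th roots of unity ζ of every level n is identically zero, since f(ζ−1) = 0 is equivalent to divisibility by Φ_{p^n}(1+X)) -/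
/-!
Modulo `p`, `Φ_{p^n}(1+X)` becomes `((1+X) - 1)^(p^n - p^(n-1)) = X^(p^n - p^(n-1))`. So if all
`Φ_{p^n}(1+X)` divide `f`, the reduction of `f` mod `p` is divisible by arbitrarily high powers
of `X`, i.e. `p ∣ f`. Since `p` is prime in `ℤ_p⟦X⟧` and does not divide `Φ_{p^n}(1+X)`, the
quotient `f / p` is again divisible by every `Φ_{p^n}(1+X)`. Hence `p^j ∣ f` for all `j`, which
forces `f = 0` in the noetherian domain `ℤ_p⟦X⟧`.
-/

open scoped Polynomial PowerSeries

namespace PowerSeries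

variable {R : Type*} [CommRing R]

theorem C_dvd_iff_map_eq_zero {S : Type*} [CommRing S] {φ : R →+* S} {a : R}
    (hφ : RingHom.ker φ = Ideal.span {a}) (f : R⟦X⟧) : C a ∣ f ↔ map φ f = 0 := by
  have hcoeff (r : R) : φ r = 0 ↔ a ∣ r := by
    rw [← RingHom.mem_ker, hφ, Ideal.mem_span_singleton]
  constructor
  · rintro ⟨g, rfl⟩
    rw [map_mul, map_C, (hcoeff a).2 dvd_rfl, map_zero, zero_mul]
  · intro hf
    have hdvd (n : ℕ) : a ∣ coeff n f := (hcoeff _).1 (by simpa using congr_arg (coeff n) hf)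
    choose c hc using hdvd
    exact ⟨mk c, ext fun n => by rw [coeff_C_mul, coeff_mk, ← hc]⟩

theorem prime_C {a : R} (ha : Prime a) : Prime (C a) := by
  have := (Ideal.span_singleton_prime ha.ne_zero).2 ha
  have hdvd := C_dvd_iff_map_eq_zero (Ideal.mk_ker (I := Ideal.span {a}))
  refine ⟨fun h => ha.ne_zero (C_injective (h.trans (map_zero C).symm)),
    fun h => ha.not_isUnit (by simpa using h.map constantCoeff), fun f g hfg => ?_⟩
  simp only [hdvd, map_mul, mul_eq_zero] at hfg ⊢
  exact hfg

end PowerSeries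

theorem Polynomial.map_cyclotomic_prime_pow_comp_X_add_one {R S : Type*} [CommRing R]
    [CommRing S] (p : ℕ) [hp : Fact p.Prime] [CharP S p] (φ : R →+* S) {n : ℕ} (hn : 0 < n) :
    ((cyclotomic (p ^ n) R).comp (X + 1)).map φ = X ^ (p ^ n - p ^ (n - 1)) := by
  have hcyc := cyclotomic_mul_prime_pow_eq S (m := 1) hp.out.not_dvd_one hn
  rw [mul_one, cyclotomic_one] at hcyc
  rw [map_comp, map_cyclotomic, hcyc, pow_comp, sub_comp, X_comp, one_comp, Polynomial.map_add,
    Polynomial.map_X, Polynomial.map_one, add_sub_cancel_right]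

theorem Nat.Prime.lt_pow_succ_sub_pow {p : ℕ} (hp : p.Prime) (k : ℕ) :
    k < p ^ (k + 1) - p ^ k := by
  have h1 : k < p ^ k := Nat.lt_pow_self hp.one_lt
  have h2 : 2 * p ^ k ≤ p ^ (k + 1) := by rw [pow_succ']; exact Nat.mul_le_mul_right _ hp.two_le
  omega

namespace PadicInt

variable {p : ℕ} [Fact p.Prime]

theorem ker_toZMod_eq_span_p :
    RingHom.ker (toZMod : ℤ_[p] →+* ZMod p) = Ideal.span {(p : ℤ_[p])} :=
  ker_toZMod.trans maximalIdeal_eq_span_p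

theorem map_toZMod_cyclotomic_prime_pow_comp_X_add_one {n : ℕ} (hn : 0 < n) :
    PowerSeries.map toZMod
        (((Polynomial.cyclotomic (p ^ n) ℤ_[p]).comp (Polynomial.X + 1) : ℤ_[p][X]) : ℤ_[p]⟦X⟧) =
      PowerSeries.X ^ (p ^ n - p ^ (n - 1)) := by
  rw [← Polynomial.polynomial_map_coe, Polynomial.map_cyclotomic_prime_pow_comp_X_add_one p _ hn,
    Polynomial.coe_pow, Polynomial.coe_X]

theorem C_p_dvd_of_forall_cyclotomic_comp_dvd {f : ℤ_[p]⟦X⟧}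
    (h : ∀ n : ℕ, 1 ≤ n →
      (((Polynomial.cyclotomic (p ^ n) ℤ_[p]).comp (Polynomial.X + 1) : ℤ_[p][X]) : ℤ_[p]⟦X⟧) ∣ f) :
    PowerSeries.C (p : ℤ_[p]) ∣ f := by
  rw [PowerSeries.C_dvd_iff_map_eq_zero ker_toZMod_eq_span_p]
  ext k
  have hdvd := map_dvd (PowerSeries.map toZMod) (h (k + 1) k.succ_pos)
  rw [map_toZMod_cyclotomic_prime_pow_comp_X_add_one k.succ_pos, PowerSeries.X_pow_dvd_iff] at hdvd
  simpa using hdvd k ((Fact.out : p.Prime).lt_pow_succ_sub_pow k)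

theorem dvd_of_cyclotomic_comp_dvd_C_p_mul {n : ℕ} (hn : 0 < n) {g : ℤ_[p]⟦X⟧}
    (h : (((Polynomial.cyclotomic (p ^ n) ℤ_[p]).comp (Polynomial.X + 1) : ℤ_[p][X]) : ℤ_[p]⟦X⟧) ∣
      PowerSeries.C (p : ℤ_[p]) * g) :
    (((Polynomial.cyclotomic (p ^ n) ℤ_[p]).comp (Polynomial.X + 1) : ℤ_[p][X]) : ℤ_[p]⟦X⟧) ∣ g := by
  obtain ⟨q, hq⟩ := h
  have hprime := PowerSeries.prime_C (prime_p (p := p))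
  have hnot : ¬ PowerSeries.C (p : ℤ_[p]) ∣
      (((Polynomial.cyclotomic (p ^ n) ℤ_[p]).comp (Polynomial.X + 1) : ℤ_[p][X]) : ℤ_[p]⟦X⟧) := by
    rw [PowerSeries.C_dvd_iff_map_eq_zero ker_toZMod_eq_span_p,
      map_toZMod_cyclotomic_prime_pow_comp_X_add_one hn]
    exact pow_ne_zero _ PowerSeries.X_ne_zero
  obtain ⟨q', rfl⟩ := (hprime.dvd_or_dvd ⟨g, hq.symm⟩).resolve_left hnot
  exact ⟨q', mul_left_cancel₀ hprime.ne_zero (by rw [hq]; ring)⟩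

theorem C_p_pow_dvd_of_forall_cyclotomic_comp_dvd (j : ℕ) {f : ℤ_[p]⟦X⟧}
    (h : ∀ n : ℕ, 1 ≤ n →
      (((Polynomial.cyclotomic (p ^ n) ℤ_[p]).comp (Polynomial.X + 1) : ℤ_[p][X]) : ℤ_[p]⟦X⟧) ∣ f) :
    PowerSeries.C (p : ℤ_[p]) ^ j ∣ f := by
  induction j generalizing f with
  | zero => exact one_dvd f
  | succ j ih =>
    obtain ⟨g, rfl⟩ := C_p_dvd_of_forall_cyclotomic_comp_dvd h
    rw [pow_succ']
    exact mul_dvd_mul_left _ (ih fun n hn => dvd_of_cyclotomic_comp_dvd_C_p_mul hn (h n hn))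

end PadicInt

/-- If `f ∈ ℤ_p⟦X⟧` is divisible by `Φ_{p^n}(1+X)` (the `p^n`-th cyclotomic
polynomial evaluated at `1+X`, regarded as a power series) for every `n ≥ 1`,
then `f = 0`. -/
theorem eq_zero_of_forall_cyclotomic_comp_dvd (p : ℕ) [Fact p.Prime]
    (f : PowerSeries ℤ_[p])
    (h : ∀ n : ℕ, 1 ≤ n →
      (((Polynomial.cyclotomic (p ^ n) ℤ_[p]).comp (Polynomial.X + 1) :
        Polynomial ℤ_[p]) : PowerSeries ℤ_[p]) ∣ f) :
    f = 0 := by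
  by_contra hf
  obtain ⟨j, hj⟩ := FiniteMultiplicity.of_prime_left (PowerSeries.prime_C PadicInt.prime_p) hf
  exact hj (PadicInt.C_p_pow_dvd_of_forall_cyclotomic_comp_dvd (j + 1) h)
end
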